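/- Let μ ∈ ℝ with |μ| ≤ θ < 1, let λ± = iμ ± √(1 − μ²), and let P be the 2×2 matrix with columns (λ₊, 1)ᵀ and (λ₋, 1)ᵀ. Then the eigenvalues of the Hermitian matrix P*P are 2(1 + μ) and 2(1 − μ); consequently ‖P‖₂ < 2 and ‖P⁻¹‖₂ ≤ 1/√(2(1 − θ)). -/

import Mathlib

/-!
The columns of `P` have entries of modulus one, so `PᴴP` has trace `4`, and its determinant is
`|det P|² = |λ₊ - λ₋|² = 4(1 - μ²)`; a `2 × 2` matrix is determined up to spectrum by its trace
and determinant, so the eigenvalues are `2(1 ± μ)`. By the C⋆-identity `‖P‖²` is the spectral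
radius of `PᴴP`. Likewise `‖P⁻¹‖²` is the spectral radius of `(P⁻¹)ᴴP⁻¹ = (PPᴴ)⁻¹`, and `PPᴴ` has
the same trace and determinant as `PᴴP`, so this inverse has eigenvalues `1 / (2(1 ± μ))`.
-/

open Complex Matrix

theorem CStarRing.norm_sq_le_of_forall_mem_spectrum {A : Type*} [CStarAlgebra A] (x : A)
    {r : ℝ} (hr : 0 ≤ r) (h : ∀ z ∈ spectrum ℂ (star x * x), ‖z‖ ≤ r) : ‖x‖ ^ 2 ≤ r := by
  rw [sq, ← CStarRing.norm_star_mul_self,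
    ← (IsSelfAdjoint.star_mul_self x).toReal_spectralRadius_complex_eq_norm]
  refine ENNReal.toReal_le_of_le_ofReal hr (iSup₂_le fun z hz => ?_)
  rw [← ENNReal.ofReal_coe_nnreal, coe_nnnorm]
  exact ENNReal.ofReal_le_ofReal (h z hz)

namespace Matrix

variable {K : Type*} [Field K]

theorem spectrum_eq_pair_of_trace_of_det {M : Matrix (Fin 2) (Fin 2) K} {a b : K}
    (htr : M.trace = a + b) (hdet : M.det = a * b) : spectrum K M = {a, b} := by
  ext z
  have hfactor : z ^ 2 - (a + b) * z + a * b = (z - a) * (z - b) := by ring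
  simp [mem_spectrum_iff_isRoot_charpoly, charpoly_fin_two, htr, hdet, hfactor, sub_eq_zero]

-- For singular `M` both sides are junk zeros: `M⁻¹ = 0` and `M.trace / 0 = 0`.
theorem trace_inv_fin_two (M : Matrix (Fin 2) (Fin 2) K) : M⁻¹.trace = M.trace / M.det := by
  rw [inv_def, trace_smul, adjugate_fin_two, Ring.inverse_eq_inv', trace_fin_two, trace_fin_two]
  simp [div_eq_inv_mul, add_comm]

theorem spectrum_inv_eq_pair_of_trace_of_det {M : Matrix (Fin 2) (Fin 2) K} {a b : K}
    (htr : M.trace = a + b) (hdet : M.det = a * b) (ha : a ≠ 0) (hb : b ≠ 0) :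
    spectrum K M⁻¹ = {a⁻¹, b⁻¹} := by
  refine spectrum_eq_pair_of_trace_of_det ?_ ?_
  · rw [trace_inv_fin_two, htr, hdet]
    field_simp
    ring
  · rw [det_nonsing_inv, hdet, Ring.inverse_eq_inv', mul_inv]

theorem trace_conjTranspose_mul_self_fin_two (A : Matrix (Fin 2) (Fin 2) ℂ) :
    (Aᴴ * A).trace = ‖A 0 0‖ ^ 2 + ‖A 0 1‖ ^ 2 + ‖A 1 0‖ ^ 2 + ‖A 1 1‖ ^ 2 := by
  simp only [trace_fin_two, mul_apply, Fin.sum_univ_two, conjTranspose_apply, RCLike.star_def,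
    conj_mul']
  ring

theorem det_conjTranspose_mul_self {n : Type*} [Fintype n] [DecidableEq n]
    (A : Matrix n n ℂ) : (Aᴴ * A).det = ‖A.det‖ ^ 2 := by
  rw [det_mul, det_conjTranspose, RCLike.star_def, conj_mul']

theorem norm_toEuclideanCLM_sq_le {n : Type*} [Fintype n] [DecidableEq n]
    (A : Matrix n n ℂ) {r : ℝ} (hr : 0 ≤ r) (h : ∀ z ∈ spectrum ℂ (Aᴴ * A), ‖z‖ ≤ r) :
    ‖toEuclideanCLM (𝕜 := ℂ) A‖ ^ 2 ≤ r := by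
  refine CStarRing.norm_sq_le_of_forall_mem_spectrum _ hr fun z hz => h z ?_
  rwa [← map_star, ← map_mul, AlgEquiv.spectrum_eq (toEuclideanCLM (𝕜 := ℂ))] at hz

theorem norm_toEuclideanCLM_sq_le_of_spectrum_eq_pair {n : Type*} [Fintype n] [DecidableEq n]
    {A : Matrix n n ℂ} {a b r : ℝ} (h : spectrum ℂ (Aᴴ * A) = {(a : ℂ), (b : ℂ)})
    (ha : |a| ≤ r) (hb : |b| ≤ r) : ‖toEuclideanCLM (𝕜 := ℂ) A‖ ^ 2 ≤ r :=
  norm_toEuclideanCLM_sq_le A ((abs_nonneg a).trans ha) <| by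
    rw [h]
    rintro z (rfl | rfl) <;> simpa

end Matrix

theorem Complex.norm_I_mul_add_ofReal_eq_one {μ s : ℝ} (h : s ^ 2 + μ ^ 2 = 1) :
    ‖I * μ + s‖ = 1 := by
  rw [show I * μ + s = (s : ℂ) + μ * I by ring, norm_add_mul_I, h, Real.sqrt_one]

theorem Complex.norm_I_mul_sub_ofReal_eq_one {μ s : ℝ} (h : s ^ 2 + μ ^ 2 = 1) :
    ‖I * μ - s‖ = 1 := by
  simpa [sub_eq_add_neg] using norm_I_mul_add_ofReal_eq_one (s := -s) (by rwa [neg_sq])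

section EigenvectorMatrix

variable {μ s : ℝ}

theorem trace_conjTranspose_mul_self_of_sq_add_sq (h : s ^ 2 + μ ^ 2 = 1) :
    (!![I * μ + s, I * μ - s; 1, 1]ᴴ * !![I * μ + s, I * μ - s; 1, 1]).trace
      = ((2 * (1 + μ) : ℝ) : ℂ) + ((2 * (1 - μ) : ℝ) : ℂ) := by
  rw [trace_conjTranspose_mul_self_fin_two]
  simp only [of_apply, cons_val', cons_val_zero, cons_val_one, cons_val_fin_one, norm_one,
    Complex.norm_I_mul_add_ofReal_eq_one h, Complex.norm_I_mul_sub_ofReal_eq_one h]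
  push_cast
  ring

theorem det_conjTranspose_mul_self_of_sq_add_sq (h : s ^ 2 + μ ^ 2 = 1) :
    (!![I * μ + s, I * μ - s; 1, 1]ᴴ * !![I * μ + s, I * μ - s; 1, 1]).det
      = ((2 * (1 + μ) : ℝ) : ℂ) * ((2 * (1 - μ) : ℝ) : ℂ) := by
  have hdet : (I * μ + s) * 1 - (I * μ - s) * 1 = ((2 * s : ℝ) : ℂ) := by
    push_cast
    ring
  rw [det_conjTranspose_mul_self, det_fin_two_of, hdet, norm_real, Real.norm_eq_abs]
  norm_cast
  rw [sq_abs]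
  linear_combination 4 * h

end EigenvectorMatrix

/-- For P = [[λ₊, λ₋], [1, 1]] with λ± = iμ ± √(1 − μ²), |μ| ≤ θ < 1, the
eigenvalues of PᴴP are 2(1 + μ) and 2(1 − μ); hence ‖P‖₂ < 2 and
‖P⁻¹‖₂ ≤ 1/√(2(1 − θ)). -/
theorem stmt_5 (μ θ : ℝ) (hμ : |μ| ≤ θ) (hθ : θ < 1) :
    let lp : ℂ := I * μ + Real.sqrt (1 - μ ^ 2)
    let lm : ℂ := I * μ - Real.sqrt (1 - μ ^ 2)
    let P : Matrix (Fin 2) (Fin 2) ℂ := !![lp, lm; 1, 1]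
    spectrum ℂ (Pᴴ * P) = {(2 * (1 + μ) : ℂ), (2 * (1 - μ) : ℂ)} ∧
    ‖Matrix.toEuclideanCLM (𝕜 := ℂ) P‖ < 2 ∧
    ‖Matrix.toEuclideanCLM (𝕜 := ℂ) P⁻¹‖ ≤ 1 / Real.sqrt (2 * (1 - θ)) := by
  intro lp lm P
  obtain ⟨hθμ, hμθ⟩ := abs_le.mp hμ
  have hs : Real.sqrt (1 - μ ^ 2) ^ 2 + μ ^ 2 = 1 := by
    rw [Real.sq_sqrt (by nlinarith)]
    ring
  have htr := trace_conjTranspose_mul_self_of_sq_add_sq hs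
  have hdet := det_conjTranspose_mul_self_of_sq_add_sq hs
  have hspec := spectrum_eq_pair_of_trace_of_det htr hdet
  have hspec_inv : spectrum ℂ ((P⁻¹)ᴴ * P⁻¹)
      = {(((2 * (1 + μ))⁻¹ : ℝ) : ℂ), (((2 * (1 - μ))⁻¹ : ℝ) : ℂ)} := by
    rw [conjTranspose_nonsing_inv, ← Matrix.mul_inv_rev, ofReal_inv, ofReal_inv]
    refine spectrum_inv_eq_pair_of_trace_of_det (by rwa [trace_mul_comm])
      (by rwa [det_mul_comm]) ?_ ?_ <;> norm_cast <;> linarith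
  refine ⟨by simpa using hspec, ?_, ?_⟩
  · have hP := norm_toEuclideanCLM_sq_le_of_spectrum_eq_pair hspec (r := 2 * (1 + θ))
      (abs_le.mpr ⟨by linarith, by linarith⟩) (abs_le.mpr ⟨by linarith, by linarith⟩)
    exact lt_of_pow_lt_pow_left₀ 2 zero_le_two (by linarith)
  · have hinv_le (a : ℝ) (ha : 2 * (1 - θ) ≤ a) : |a⁻¹| ≤ (2 * (1 - θ))⁻¹ := by
      rw [abs_inv, abs_of_pos (by linarith)]
      exact inv_anti₀ (by linarith) ha
    have hPinv := norm_toEuclideanCLM_sq_le_of_spectrum_eq_pair hspec_inv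
      (hinv_le _ (by linarith)) (hinv_le _ (by linarith))
    rw [one_div, ← Real.sqrt_inv]
    exact (le_abs_self _).trans (Real.abs_le_sqrt hPinv)
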